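/- arXiv:1505.06263 — 3 statements merged into one kernel-verified Lean document; each statement's English description precedes it below -/
import Mathlib

section
/- Let n be odd, let f₀, f₁, f₂, f₃, f₄, f₅ be monic polynomials in F₂[x] with f₅|f₄|f₃|f₂|f₁|f₀|(xⁿ−1) and deg f₅ < n, and let C be the cyclic code of length n over R given by the ideal of R[x]/(xⁿ−1) generated by f₀, uf₁, u²f₂, u³f₃, u⁴f₄, u⁵f₅ (coefficients embedded via F₂ ↪ R). Then there exist two distinct codewords c₁, c₂ ∈ C with d_c(c₁, c₂) ≤ min₀≤i≤₅ deg(f_i) + 1; that is, the minimum edit distance of C is at most min_i deg(f_i) + 1. -/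
open Polynomial

namespace Levenshtein

/-- Costs of edit operations (as in the older Mathlib `Levenshtein.Cost`). -/
structure Cost (α β δ : Type*) where
  delete : α → δ
  insert : β → δ
  substitute : α → β → δ

/-- Unit costs for deletion, insertion and substitution (older Mathlib `defaultCost`). -/
def defaultCost {α : Type*} [DecidableEq α] : Cost α α ℕ where
  delete _ := 1
  insert _ := 1
  substitute a b := if a = b then 0 else 1

/-- One step of the dynamic program (older Mathlib `Levenshtein.impl`). -/
def impl {α β δ : Type*} [AddZeroClass δ] [Min δ]
    (C : Cost α β δ) (xs : List α) (y : β) (d : {r : List δ // 0 < r.length}) :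
    {r : List δ // 0 < r.length} :=
  let ⟨ds, w⟩ := d
  xs.zip (ds.zip ds.tail) |>.foldr
    (init := ⟨[ds.getLast (List.ne_nil_of_length_pos w) + C.insert y], by simp⟩)
    (fun ⟨x, d₀, d₁⟩ ⟨r, w⟩ =>
      ⟨min (C.delete x + r[0]) (min (C.insert y + d₀) (C.substitute x y + d₁)) :: r, by simp⟩)

end Levenshtein

/-- Edit distances of all suffixes (older Mathlib `suffixLevenshtein`). -/
def suffixLevenshtein {α β δ : Type*} [AddZeroClass δ] [Min δ]
    (C : Levenshtein.Cost α β δ) (xs : List α) (ys : List β) :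
    {r : List δ // 0 < r.length} :=
  ys.foldr
    (Levenshtein.impl C xs)
    (xs.foldr (init := ⟨[0], by simp⟩) (fun a ⟨r, w⟩ => ⟨(C.delete a + r[0]) :: r, by simp⟩))

/-- The Levenshtein edit distance with cost `C` (older Mathlib `levenshtein`). -/
def levenshtein {α β δ : Type*} [AddZeroClass δ] [Min δ]
    (C : Levenshtein.Cost α β δ) (xs : List α) (ys : List β) : δ :=
  let ⟨r, _⟩ := suffixLevenshtein C xs ys
  r[0]

/-- The ring `R = F₂[u]/(u⁶)`. -/
abbrev R : Type := AdjoinRoot (X ^ 6 : (ZMod 2)[X])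

noncomputable instance : DecidableEq R := Classical.decEq _

/-- `u ∈ R`, the image of `X`. -/
noncomputable def u : R := AdjoinRoot.root _

/-- Lift a binary polynomial to a polynomial over `R` via `F₂ ↪ R`. -/
noncomputable def rmap (f : (ZMod 2)[X]) : R[X] := f.map (algebraMap (ZMod 2) R)

/-- The quotient map `R[x] → R[x]/(xⁿ - 1)`. -/
noncomputable def mkq (n : ℕ) : R[X] →+* R[X] ⧸ Ideal.span ({(X : R[X]) ^ n - 1} : Set R[X]) :=
  Ideal.Quotient.mk _

/-- The cyclic code of length `n` over `R` given (as a set of coefficient vectors) by the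
ideal of `R[x]/(xⁿ - 1)` generated by `f₀, u f₁, u² f₂, u³ f₃, u⁴ f₄, u⁵ f₅`. -/
noncomputable def cyclicCode (n : ℕ) (f₀ f₁ f₂ f₃ f₄ f₅ : (ZMod 2)[X]) :
    Set (Fin n → R) :=
  {c | mkq n (∑ i : Fin n, Polynomial.C (c i) * X ^ (i : ℕ)) ∈
    Ideal.span ({mkq n (rmap f₀), mkq n (Polynomial.C u * rmap f₁),
      mkq n (Polynomial.C (u ^ 2) * rmap f₂), mkq n (Polynomial.C (u ^ 3) * rmap f₃),
      mkq n (Polynomial.C (u ^ 4) * rmap f₄), mkq n (Polynomial.C (u ^ 5) * rmap f₅)} :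
        Set (R[X] ⧸ Ideal.span ({(X : R[X]) ^ n - 1} : Set R[X])))}

/-! The two codewords are `0` and the coefficient vector of `u⁵ f₅`, which is nonzero because
`f₅` is monic and `u⁵ ≠ 0` in `F₂[u]/(u⁶)`. Substituting position by position shows that the edit
distance is at most the Hamming distance, so `d_c(0, u⁵ f₅)` is at most the number of nonzero
coefficients of `f₅`, hence at most `deg f₅ + 1`; and `deg f₅` is the least of the degrees since
`f₅` divides every `fᵢ`. -/

namespace Levenshtein

variable {α β δ : Type*} [AddZeroClass δ] [Min δ] (C : Cost α β δ)

theorem impl_cons (x : α) (xs : List α) (y : β) (d : δ) (ds : List δ)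
    (w : 0 < (d :: ds).length) (hw : 0 < ds.length) :
    impl C (x :: xs) y ⟨d :: ds, w⟩ =
      let ⟨r, w⟩ := impl C xs y ⟨ds, hw⟩
      ⟨min (C.delete x + r[0]) (min (C.insert y + d) (C.substitute x y + ds[0])) :: r,
        by simp⟩ :=
  match ds, hw with | _ :: _, _ => rfl

theorem impl_length (xs : List α) (y : β) (d : {r : List δ // 0 < r.length})
    (w : d.1.length = xs.length + 1) :
    (impl C xs y d).1.length = xs.length + 1 := by
  induction xs generalizing d with
  | nil => rfl
  | cons x xs ih =>
    match d, w with
    | ⟨d₁ :: d₂ :: ds, _⟩, w =>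
      rw [impl_cons C x xs y d₁ (d₂ :: ds) (by simp) (by simp)]
      simpa using ih ⟨d₂ :: ds, by simp⟩ (by simpa using w)

end Levenshtein

section SuffixLevenshtein

open Levenshtein

variable {α β δ : Type*} [AddZeroClass δ] [Min δ] (C : Cost α β δ)

theorem suffixLevenshtein_length (xs : List α) (ys : List β) :
    (suffixLevenshtein C xs ys).1.length = xs.length + 1 := by
  induction ys with
  | nil =>
    induction xs with
    | nil => rfl
    | cons _ xs ih => simp_all [suffixLevenshtein]
  | cons y ys ih => exact impl_length C xs y _ ih

theorem suffixLevenshtein_cons₂ (xs : List α) (y : β) (ys : List β) :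
    suffixLevenshtein C xs (y :: ys) = impl C xs y (suffixLevenshtein C xs ys) :=
  rfl

theorem suffixLevenshtein_eq_cons_tail (xs : List α) (ys : List β) :
    (suffixLevenshtein C xs ys).1 = levenshtein C xs ys :: (suffixLevenshtein C xs ys).1.tail :=
  match h : suffixLevenshtein C xs ys with | ⟨_ :: _, _⟩ => by simp [levenshtein, h]

theorem suffixLevenshtein_cons₁_fst (x : α) (xs : List α) (ys : List β) :
    (suffixLevenshtein C (x :: xs) ys).1 =
      levenshtein C (x :: xs) ys :: (suffixLevenshtein C xs ys).1 := by
  induction ys with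
  | nil => rfl
  | cons y ys ih =>
    rw [suffixLevenshtein_eq_cons_tail, suffixLevenshtein_cons₂]
    congr 1
    have hs : suffixLevenshtein C (x :: xs) ys =
        ⟨levenshtein C (x :: xs) ys :: (suffixLevenshtein C xs ys).1, by simp⟩ :=
      Subtype.ext ih
    rw [hs, impl_cons C x xs y _ _ _ (by simp [suffixLevenshtein_length])]
    rfl

theorem levenshtein_cons_cons (x : α) (xs : List α) (y : β) (ys : List β) :
    levenshtein C (x :: xs) (y :: ys) =
      min (C.delete x + levenshtein C xs (y :: ys))
        (min (C.insert y + levenshtein C (x :: xs) ys)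
          (C.substitute x y + levenshtein C xs ys)) := by
  have hs : suffixLevenshtein C (x :: xs) ys =
      ⟨levenshtein C (x :: xs) ys :: (suffixLevenshtein C xs ys).1, by simp⟩ :=
    Subtype.ext (suffixLevenshtein_cons₁_fst C x xs ys)
  have himpl := impl_cons C x xs y (levenshtein C (x :: xs) ys)
    (suffixLevenshtein C xs ys).1 (by simp) (by simp [suffixLevenshtein_length])
  unfold levenshtein
  rw [suffixLevenshtein_cons₂, hs, himpl]
  rfl

end SuffixLevenshtein

theorem hammingDist_fin_succ {α : Type*} [DecidableEq α] {n : ℕ} (f g : Fin (n + 1) → α) :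
    hammingDist f g = (if f 0 ≠ g 0 then 1 else 0) + hammingDist (Fin.tail f) (Fin.tail g) := by
  rw [hammingDist, hammingDist, Finset.card_filter, Finset.card_filter, Fin.sum_univ_succ]
  rfl

theorem levenshtein_defaultCost_ofFn_le_hammingDist {α : Type*} [DecidableEq α] :
    ∀ {n : ℕ} (f g : Fin n → α),
      levenshtein Levenshtein.defaultCost (List.ofFn f) (List.ofFn g) ≤ hammingDist f g
  | 0, _, _ => Nat.zero_le _
  | n + 1, f, g => by
    rw [List.ofFn_succ, List.ofFn_succ, levenshtein_cons_cons, hammingDist_fin_succ]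
    refine ((min_le_right _ _).trans (min_le_right _ _)).trans (add_le_add ?_ ?_)
    · by_cases h : f 0 = g 0 <;> simp [Levenshtein.defaultCost, h]
    · exact levenshtein_defaultCost_ofFn_le_hammingDist (Fin.tail f) (Fin.tail g)

namespace Polynomial

variable {S : Type*} [Semiring S]

theorem sum_fin_C_coeff_mul_X_pow {p : S[X]} {n : ℕ} (hp : p.natDegree < n) :
    ∑ i : Fin n, C (p.coeff i) * X ^ (i : ℕ) = p := by
  rw [Fin.sum_univ_eq_sum_range (fun i => C (p.coeff i) * X ^ i)]
  simp only [C_mul_X_pow_eq_monomial]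
  exact (as_sum_range' p n hp).symm

theorem hammingNorm_coeff_le [DecidableEq S] (p : S[X]) (n : ℕ) :
    hammingNorm (fun i : Fin n => p.coeff i) ≤ p.natDegree + 1 :=
  calc hammingNorm (fun i : Fin n => p.coeff i)
      ≤ p.support.card :=
        Finset.card_le_card_of_injOn Fin.val (by simp [Set.MapsTo, mem_support_iff])
          Fin.val_injective.injOn
    _ ≤ p.natDegree + 1 := card_supp_le_succ_natDegree p

end Polynomial

theorem u_pow_ne_zero {k : ℕ} (hk : k < 6) : u ^ k ≠ 0 := by
  rw [u, ← AdjoinRoot.mk_X, ← map_pow, Ne, AdjoinRoot.mk_eq_zero,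
    pow_dvd_pow_iff X_ne_zero not_isUnit_X]
  omega

theorem coeff_C_mul_rmap (a : R) (f : (ZMod 2)[X]) (i : ℕ) :
    (C a * rmap f).coeff i = a * algebraMap (ZMod 2) R (f.coeff i) := by
  rw [coeff_C_mul, rmap, coeff_map]

theorem natDegree_C_mul_rmap_le (a : R) (f : (ZMod 2)[X]) :
    (C a * rmap f).natDegree ≤ f.natDegree :=
  (natDegree_C_mul_le _ _).trans natDegree_map_le

section CyclicCode

variable {n : ℕ} {f₀ f₁ f₂ f₃ f₄ f₅ : (ZMod 2)[X]}

theorem zero_mem_cyclicCode : 0 ∈ cyclicCode n f₀ f₁ f₂ f₃ f₄ f₅ := by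
  simp [cyclicCode]

theorem coeff_C_u_pow_five_mul_rmap_mem_cyclicCode (hdeg : f₅.natDegree < n) :
    (fun i : Fin n => (C (u ^ 5) * rmap f₅).coeff i) ∈ cyclicCode n f₀ f₁ f₂ f₃ f₄ f₅ := by
  rw [cyclicCode, Set.mem_ofPred_eq,
    sum_fin_C_coeff_mul_X_pow ((natDegree_C_mul_rmap_le _ _).trans_lt hdeg)]
  exact Ideal.subset_span (by simp)

end CyclicCode

theorem edit_distance_le_min_deg_add_one_general (n : ℕ)
    (f₀ f₁ f₂ f₃ f₄ f₅ : (ZMod 2)[X])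
    (hm₀ : f₀.Monic) (hm₁ : f₁.Monic) (hm₂ : f₂.Monic) (hm₃ : f₃.Monic)
    (hm₄ : f₄.Monic) (hm₅ : f₅.Monic)
    (h54 : f₅ ∣ f₄) (h43 : f₄ ∣ f₃) (h32 : f₃ ∣ f₂) (h21 : f₂ ∣ f₁) (h10 : f₁ ∣ f₀)
    (hdeg : f₅.natDegree < n) :
    ∃ c₁ ∈ cyclicCode n f₀ f₁ f₂ f₃ f₄ f₅, ∃ c₂ ∈ cyclicCode n f₀ f₁ f₂ f₃ f₄ f₅,
      c₁ ≠ c₂ ∧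
      levenshtein Levenshtein.defaultCost (List.ofFn c₁) (List.ofFn c₂)
        ≤ min f₀.natDegree (min f₁.natDegree (min f₂.natDegree
            (min f₃.natDegree (min f₄.natDegree f₅.natDegree)))) + 1 := by
  set g : R[X] := C (u ^ 5) * rmap f₅
  have hmin : f₅.natDegree ≤ min f₀.natDegree (min f₁.natDegree (min f₂.natDegree
      (min f₃.natDegree (min f₄.natDegree f₅.natDegree)))) :=
    le_min (natDegree_le_of_dvd (h54.trans <| h43.trans <| h32.trans <| h21.trans h10)
      hm₀.ne_zero) <| le_min (natDegree_le_of_dvd (h54.trans <| h43.trans <| h32.trans h21)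
      hm₁.ne_zero) <| le_min (natDegree_le_of_dvd (h54.trans <| h43.trans h32) hm₂.ne_zero) <|
      le_min (natDegree_le_of_dvd (h54.trans h43) hm₃.ne_zero) <|
      le_min (natDegree_le_of_dvd h54 hm₄.ne_zero) le_rfl
  refine ⟨0, zero_mem_cyclicCode, fun i => g.coeff i,
    coeff_C_u_pow_five_mul_rmap_mem_cyclicCode hdeg, fun h => ?_, ?_⟩
  · have hlead := congrFun h ⟨_, hdeg⟩
    rw [Pi.zero_apply, coeff_C_mul_rmap, hm₅.coeff_natDegree, map_one, mul_one] at hlead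
    exact u_pow_ne_zero (by norm_num) hlead.symm
  calc levenshtein Levenshtein.defaultCost (List.ofFn 0) (List.ofFn fun i : Fin n => g.coeff i)
      ≤ hammingDist 0 (fun i : Fin n => g.coeff i) :=
        levenshtein_defaultCost_ofFn_le_hammingDist _ _
    _ = hammingNorm (fun i : Fin n => g.coeff i) := by rw [hammingDist_zero_left]
    _ ≤ g.natDegree + 1 := hammingNorm_coeff_le g n
    _ ≤ _ := Nat.add_le_add_right ((natDegree_C_mul_rmap_le _ _).trans hmin) 1

/-- for `n` odd and `f₅|f₄|f₃|f₂|f₁|f₀|(xⁿ-1)` monic in `F₂[x]` with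
`deg f₅ < n`, the cyclic code `⟨f₀, uf₁, u²f₂, u³f₃, u⁴f₄, u⁵f₅⟩` contains two distinct
codewords at edit distance at most `min_i deg(f_i) + 1`. -/
theorem edit_distance_le_min_deg_add_one (n : ℕ) (hodd : Odd n)
    (f₀ f₁ f₂ f₃ f₄ f₅ : (ZMod 2)[X])
    (hm₀ : f₀.Monic) (hm₁ : f₁.Monic) (hm₂ : f₂.Monic) (hm₃ : f₃.Monic)
    (hm₄ : f₄.Monic) (hm₅ : f₅.Monic)
    (h54 : f₅ ∣ f₄) (h43 : f₄ ∣ f₃) (h32 : f₃ ∣ f₂) (h21 : f₂ ∣ f₁) (h10 : f₁ ∣ f₀)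
    (h0 : f₀ ∣ X ^ n - 1) (hdeg : f₅.natDegree < n) :
    ∃ c₁ ∈ cyclicCode n f₀ f₁ f₂ f₃ f₄ f₅, ∃ c₂ ∈ cyclicCode n f₀ f₁ f₂ f₃ f₄ f₅,
      c₁ ≠ c₂ ∧
      levenshtein Levenshtein.defaultCost (List.ofFn c₁) (List.ofFn c₂)
        ≤ min f₀.natDegree (min f₁.natDegree (min f₂.natDegree
            (min f₃.natDegree (min f₄.natDegree f₅.natDegree)))) + 1 :=
  edit_distance_le_min_deg_add_one_general n f₀ f₁ f₂ f₃ f₄ f₅ hm₀ hm₁ hm₂ hm₃ hm₄ hm₅ h54 h43 h32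
    h21 h10 hdeg
end

section
/- Let n be even, let f₁ ∈ F₂[x] be a monic polynomial of degree r < n dividing xⁿ−1 in F₂[x], and let C ⊆ R̃ⁿ be the skew cyclic code generated by v·f₁ (the polynomial whose coefficients are v times the coefficients of f₁, embedded F₂ ↪ R̃), where v·f₁ has minimal degree in C (every nonzero element of C has degree ≥ r). If C is reverse-complement, then f₁ is self-reciprocal. -/
/-- The ring `R̃ = F₂ + vF₂` with `v² = v`, realized as `F₂ × F₂` with `v = (1, 0)`. -/
abbrev Rt : Type := ZMod 2 × ZMod 2

/-- The element `v = (1, 0)` of `R̃`. -/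
def vv : Rt := (1, 0)

/-- The ring automorphism `θ` of order `2` of `R̃` (it swaps `v` and `v + 1`). -/
def theta (a : Rt) : Rt := (a.2, a.1)

/-- The `θ`-twisted cyclic shift `σ(c₀, …, c_{n-1}) = (θ(c_{n-1}), θ(c₀), …, θ(c_{n-2}))`. -/
def sshift {n : ℕ} (c : Fin n → Rt) : Fin n → Rt :=
  fun j => theta (c ⟨(j.val + (n - 1)) % n, Nat.mod_lt _ j.pos⟩)

/-- Reverse-complement of a vector: `(c₀, …, c_{n-1}) ↦ (ĉ_{n-1}, …, ĉ₀)` with `x̂ = x + v`. -/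
def rcomp {n : ℕ} (c : Fin n → Rt) : Fin n → Rt := fun j => c j.rev + vv

/-- The skew cyclic code generated by a vector `f`: the `R̃`-span of `{σʲ(f) : 0 ≤ j ≤ n-1}`. -/
def skewSpan {n : ℕ} (f : Fin n → Rt) : Submodule Rt (Fin n → Rt) :=
  Submodule.span Rt (Set.range fun j : Fin n => sshift^[j.val] f)

/-- The skew cyclic code generated by two vectors `f, g`:
the `R̃`-span of `{σʲ(f), σʲ(g) : 0 ≤ j ≤ n-1}`. -/
def skewSpan₂ {n : ℕ} (f g : Fin n → Rt) : Submodule Rt (Fin n → Rt) :=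
  Submodule.span Rt
    (Set.range (fun j : Fin n => sshift^[j.val] f) ∪
      Set.range (fun j : Fin n => sshift^[j.val] g))

open Polynomial

/-- The coefficient vector in `R̃ⁿ` of `v · f₁` for a binary polynomial `f₁`. -/
noncomputable def vPoly (n : ℕ) (f₁ : (ZMod 2)[X]) : Fin n → Rt :=
  fun j => vv * algebraMap (ZMod 2) Rt (f₁.coeff j.val)

/-! ### Auxiliary definitions and lemmas -/

/-- Polynomial of the first (`v`) components of a vector. -/
noncomputable def tp1 {n : ℕ} (c : Fin n → Rt) : (ZMod 2)[X] :=
  ∑ j : Fin n, C ((c j).1) * X ^ (j : ℕ)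

/-- Polynomial of the second components of a vector. -/
noncomputable def tp2 {n : ℕ} (c : Fin n → Rt) : (ZMod 2)[X] :=
  ∑ j : Fin n, C ((c j).2) * X ^ (j : ℕ)

lemma tp1_add {n : ℕ} (a b : Fin n → Rt) : tp1 (a + b) = tp1 a + tp1 b := by
  simp [tp1, Finset.sum_add_distrib, add_mul]

lemma tp2_add {n : ℕ} (a b : Fin n → Rt) : tp2 (a + b) = tp2 a + tp2 b := by
  simp [tp2, Finset.sum_add_distrib, add_mul]

lemma tp1_smul {n : ℕ} (r : Rt) (c : Fin n → Rt) : tp1 (r • c) = C r.1 * tp1 c := by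
  simp [tp1, Finset.mul_sum, mul_assoc]

lemma tp2_smul {n : ℕ} (r : Rt) (c : Fin n → Rt) : tp2 (r • c) = C r.2 * tp2 c := by
  simp [tp2, Finset.mul_sum, mul_assoc]

lemma fst_vPoly {n : ℕ} (f₁ : (ZMod 2)[X]) (j : Fin n) :
    (vPoly n f₁ j).1 = f₁.coeff j := by
  simp [vPoly, vv]

lemma snd_vPoly {n : ℕ} (f₁ : (ZMod 2)[X]) (j : Fin n) :
    (vPoly n f₁ j).2 = 0 := by
  simp [vPoly, vv]

lemma tp1_vPoly {n : ℕ} {f₁ : (ZMod 2)[X]} (hdeg : f₁.natDegree < n) :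
    tp1 (vPoly n f₁) = f₁ := by
  rw [tp1]
  conv_rhs => rw [f₁.as_sum_range' n hdeg]
  rw [← Fin.sum_univ_eq_sum_range fun i => monomial i (f₁.coeff i)]
  refine Finset.sum_congr rfl fun j _ => ?_
  rw [fst_vPoly, C_mul_X_pow_eq_monomial]

lemma tp2_vPoly {n : ℕ} (f₁ : (ZMod 2)[X]) : tp2 (vPoly n f₁) = 0 := by
  rw [tp2]
  refine Finset.sum_eq_zero fun j _ => ?_
  rw [snd_vPoly, map_zero, zero_mul]

/-- The key shift step: modulo `f₁ ∣ Xⁿ - 1`, the twisted shift multiplies the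
component polynomial by `X`. -/
lemma dvd_sum_shift {m : ℕ} {f₁ : (ZMod 2)[X]} (hdvd : f₁ ∣ X ^ (m + 1) - 1)
    (b : Fin (m + 1) → ZMod 2)
    (hb : f₁ ∣ ∑ j : Fin (m + 1), C (b j) * X ^ (j : ℕ)) :
    f₁ ∣ ∑ j : Fin (m + 1),
      C (b ⟨((j : ℕ) + m) % (m + 1), Nat.mod_lt _ (Nat.succ_pos m)⟩) * X ^ (j : ℕ) := by
  rw [← Ideal.Quotient.eq_zero_iff_dvd] at hb ⊢
  set φ := Ideal.Quotient.mk (Ideal.span {f₁}) with hφ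
  have ht : (φ X) ^ (m + 1) = 1 := by
    have h0 : φ (X ^ (m + 1) - 1) = 0 := (Ideal.Quotient.eq_zero_iff_dvd _ _).2 hdvd
    rw [map_sub, map_pow, map_one, sub_eq_zero] at h0
    exact h0
  rw [map_sum] at hb ⊢
  have hlt : ∀ k : ℕ, k % (m + 1) < m + 1 := fun k => Nat.mod_lt _ (Nat.succ_pos m)
  set e : Fin (m + 1) → Fin (m + 1) := fun j => ⟨((j : ℕ) + 1) % (m + 1), hlt _⟩ with he
  set g : Fin (m + 1) → Fin (m + 1) := fun j => ⟨((j : ℕ) + m) % (m + 1), hlt _⟩ with hg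
  have hge : ∀ j, g (e j) = j := by
    intro j
    apply Fin.ext
    show (((j : ℕ) + 1) % (m + 1) + m) % (m + 1) = j
    rw [Nat.mod_add_mod]
    have h1 : (j : ℕ) + 1 + m = (j : ℕ) + (m + 1) := by omega
    rw [h1, Nat.add_mod_right, Nat.mod_eq_of_lt j.isLt]
  have heg : ∀ j, e (g j) = j := by
    intro j
    apply Fin.ext
    show (((j : ℕ) + m) % (m + 1) + 1) % (m + 1) = j
    rw [Nat.mod_add_mod]
    have h1 : (j : ℕ) + m + 1 = (j : ℕ) + (m + 1) := by omega
    rw [h1, Nat.add_mod_right, Nat.mod_eq_of_lt j.isLt]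
  have hbij : Function.Bijective e :=
    ⟨Function.LeftInverse.injective hge, Function.RightInverse.surjective heg⟩
  have hpow : ∀ k : ℕ, (φ X) ^ (k % (m + 1)) = (φ X) ^ k := by
    intro k
    conv_rhs => rw [← Nat.mod_add_div k (m + 1)]
    rw [pow_add, pow_mul, ht, one_pow, mul_one]
  have hsum : ∑ j : Fin (m + 1), φ X * φ (C (b j) * X ^ (j : ℕ)) =
      ∑ j : Fin (m + 1), φ (C (b (g j)) * X ^ (j : ℕ)) := by
    refine Fintype.sum_bijective e hbij _ _ fun j => ?_
    rw [hge j, map_mul, map_mul, map_pow, map_pow]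
    have hval : ((e j : Fin (m + 1)) : ℕ) = ((j : ℕ) + 1) % (m + 1) := rfl
    rw [hval, hpow, pow_succ]
    ring
  rw [← hsum, ← Finset.mul_sum, hb, mul_zero]

lemma dvd_tp1_sshift {n : ℕ} {f₁ : (ZMod 2)[X]} (hdvd : f₁ ∣ X ^ n - 1)
    {c : Fin n → Rt} (h : f₁ ∣ tp2 c) : f₁ ∣ tp1 (sshift c) := by
  match n with
  | 0 => simp only [tp1, Finset.univ_eq_empty, Finset.sum_empty]; exact dvd_zero f₁
  | m + 1 => exact dvd_sum_shift hdvd (fun j => (c j).2) h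

lemma dvd_tp2_sshift {n : ℕ} {f₁ : (ZMod 2)[X]} (hdvd : f₁ ∣ X ^ n - 1)
    {c : Fin n → Rt} (h : f₁ ∣ tp1 c) : f₁ ∣ tp2 (sshift c) := by
  match n with
  | 0 => simp only [tp2, Finset.univ_eq_empty, Finset.sum_empty]; exact dvd_zero f₁
  | m + 1 => exact dvd_sum_shift hdvd (fun j => (c j).1) h

lemma dvd_tp_iterate {n : ℕ} {f₁ : (ZMod 2)[X]} (hdeg : f₁.natDegree < n)
    (hdvd : f₁ ∣ X ^ n - 1) (k : ℕ) :
    f₁ ∣ tp1 (sshift^[k] (vPoly n f₁)) ∧ f₁ ∣ tp2 (sshift^[k] (vPoly n f₁)) := by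
  induction k with
  | zero => exact ⟨by rw [Function.iterate_zero_apply, tp1_vPoly hdeg],
      by rw [Function.iterate_zero_apply, tp2_vPoly]; exact dvd_zero f₁⟩
  | succ k ih =>
      rw [Function.iterate_succ_apply']
      exact ⟨dvd_tp1_sshift hdvd ih.2, dvd_tp2_sshift hdvd ih.1⟩

lemma dvd_of_mem_skewSpan {n : ℕ} {f₁ : (ZMod 2)[X]} (hdeg : f₁.natDegree < n)
    (hdvd : f₁ ∣ X ^ n - 1) {c : Fin n → Rt} (hc : c ∈ skewSpan (vPoly n f₁)) :
    f₁ ∣ tp1 c ∧ f₁ ∣ tp2 c := by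
  refine Submodule.span_induction ?_ ?_ ?_ ?_ hc
  · rintro x ⟨j, rfl⟩
    exact dvd_tp_iterate hdeg hdvd j.val
  · exact ⟨by simp [tp1], by simp [tp2]⟩
  · rintro x y _ _ ⟨h1, h2⟩ ⟨h3, h4⟩
    exact ⟨by rw [tp1_add]; exact dvd_add h1 h3, by rw [tp2_add]; exact dvd_add h2 h4⟩
  · rintro a x _ ⟨h1, h2⟩
    exact ⟨by rw [tp1_smul]; exact h1.mul_left _, by rw [tp2_smul]; exact h2.mul_left _⟩

lemma tp1_rev_vPoly {n : ℕ} {f₁ : (ZMod 2)[X]} (hdeg : f₁.natDegree < n) :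
    tp1 (fun j : Fin n => vPoly n f₁ j.rev) = f₁.reverse * X ^ (n - 1 - f₁.natDegree) := by
  have hrevle := f₁.reverse_natDegree_le
  ext k
  rw [coeff_mul_X_pow', tp1, finset_sum_coeff]
  simp only [coeff_C_mul, coeff_X_pow, mul_ite, mul_one, mul_zero]
  have hfst : ∀ j : Fin n, (vPoly n f₁ j.rev).1 = f₁.coeff (n - 1 - (j : ℕ)) := by
    intro j
    rw [fst_vPoly]
    congr 1
    rw [Fin.val_rev]
    omega
  by_cases hk : k < n
  · have hkv : ((⟨k, hk⟩ : Fin n) : ℕ) = k := rfl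
    rw [Finset.sum_eq_single (⟨k, hk⟩ : Fin n)]
    · rw [hfst ⟨k, hk⟩, hkv, if_pos rfl]
      by_cases h2 : n - 1 - f₁.natDegree ≤ k
      · rw [if_pos h2, coeff_reverse, revAt_le (by omega)]
        congr 1
        omega
      · rw [if_neg h2]
        exact coeff_eq_zero_of_natDegree_lt (by omega)
    · intro b _ hb
      exact if_neg fun h => hb (Fin.ext h.symm)
    · intro h
      exact absurd (Finset.mem_univ _) h
  · have hz : ∀ j : Fin n, (if k = (j : ℕ) then (vPoly n f₁ j.rev).1 else 0) = 0 :=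
      fun j => if_neg (by have := j.isLt; omega)
    rw [Finset.sum_eq_zero fun j _ => hz j,
      if_pos (by omega : n - 1 - f₁.natDegree ≤ k)]
    exact (coeff_eq_zero_of_natDegree_lt (by omega)).symm

/-- let `n` be even, `f₁ ∈ F₂[x]` monic of degree `r < n` dividing `xⁿ - 1`,
and let `C` be the skew cyclic code generated by `v·f₁`, where `v·f₁` has minimal degree in
`C`.  If `C` is reverse-complement, then `f₁` is self-reciprocal. -/
theorem skew_selfReciprocal_of_reverseComplement_v (n : ℕ) (hn : Even n)
    (f₁ : (ZMod 2)[X]) (hmonic : f₁.Monic) (hdeg : f₁.natDegree < n)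
    (hdvd : f₁ ∣ X ^ n - 1)
    (hmin : ∀ c ∈ skewSpan (vPoly n f₁), c ≠ 0 → ∃ j : Fin n, f₁.natDegree ≤ j.val ∧ c j ≠ 0)
    (hrc : ∀ c ∈ skewSpan (vPoly n f₁), rcomp c ∈ skewSpan (vPoly n f₁)) :
    f₁.reverse = f₁ := by
  have npos : 0 < n := Nat.lt_of_le_of_lt (Nat.zero_le _) hdeg
  have hv : vPoly n f₁ ∈ skewSpan (vPoly n f₁) := by
    apply Submodule.subset_span
    exact ⟨⟨0, npos⟩, by simp⟩
  have hmem : (fun j : Fin n => vPoly n f₁ j.rev) ∈ skewSpan (vPoly n f₁) := by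
    have h3 := Submodule.add_mem _ (hrc _ hv) (hrc _ (Submodule.zero_mem _))
    convert h3 using 1
    funext j
    show vPoly n f₁ j.rev = rcomp (vPoly n f₁) j + rcomp 0 j
    show vPoly n f₁ j.rev = (vPoly n f₁ j.rev + vv) + ((0 : Fin n → Rt) j.rev + vv)
    have hvv : vv + vv = 0 := by decide
    rw [Pi.zero_apply, zero_add, add_assoc, hvv, add_zero]
  have hdvd1 : f₁ ∣ tp1 (fun j : Fin n => vPoly n f₁ j.rev) :=
    (dvd_of_mem_skewSpan hdeg hdvd hmem).1
  rw [tp1_rev_vPoly hdeg] at hdvd1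
  have hc0 : f₁.coeff 0 ≠ 0 := by
    obtain ⟨g, hg⟩ := hdvd
    have h0 : (X ^ n - 1 : (ZMod 2)[X]).coeff 0 = 1 := by
      rw [coeff_sub, coeff_X_pow, coeff_one, if_neg (by omega : ¬ 0 = n), if_pos rfl]
      decide
    rw [hg, mul_coeff_zero] at h0
    intro h
    rw [h, zero_mul] at h0
    exact one_ne_zero h0.symm
  have hX : ¬ (X : (ZMod 2)[X]) ∣ f₁ := fun h => hc0 (X_dvd_iff.mp h)
  have hcop : IsCoprime f₁ ((X : (ZMod 2)[X]) ^ (n - 1 - f₁.natDegree)) :=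
    ((Polynomial.prime_X.coprime_iff_not_dvd).mpr hX).symm.pow_right
  have hdr : f₁ ∣ f₁.reverse := hcop.dvd_of_dvd_mul_right hdvd1
  obtain ⟨q, hq⟩ := hdr
  have hf0 : f₁ ≠ 0 := hmonic.ne_zero
  have hq0 : q ≠ 0 := by
    rintro rfl
    rw [mul_zero] at hq
    exact hf0 (reverse_eq_zero.mp hq)
  have hdq : q.natDegree = 0 := by
    have h1 := f₁.reverse_natDegree_le
    rw [hq, natDegree_mul hf0 hq0] at h1
    omega
  have hqC : q = C (q.coeff 0) := eq_C_of_natDegree_eq_zero hdq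
  have ha : q.coeff 0 ≠ 0 := fun h => hq0 (by rw [hqC, h, map_zero])
  have ha1 : q.coeff 0 = 1 := by
    have h2 : ∀ b : ZMod 2, b ≠ 0 → b = 1 := by decide
    exact h2 _ ha
  rw [hq, hqC, ha1, map_one, mul_one]
end

section
/- Let n be even, let f₁ ∈ F₂[x] be a monic polynomial of degree r < n dividing xⁿ−1 in F₂[x], and let C ⊆ R̃ⁿ be the skew cyclic code generated by v·f₁ (coefficients of f₁ multiplied by v, embedded F₂ ↪ R̃). If the constant vector (v, v, …, v) belongs to C and f₁ is self-reciprocal, then C is reverse-complement. -/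
open Polynomial

/-!
Read the first coordinates of a codeword as a polynomial modulo `Xⁿ - 1`. For the generators
`σᵏ(v·f₁)` this is `Xᵏ f₁` when `k` is even and `0` when `k` is odd (then `f₁` sits in the
second coordinate), and sums of squares are squares over `F₂`; so every codeword gives some
`f₁ s²`. For `(v, …, v)` this reads `1 + X + ⋯ + Xⁿ⁻¹ ≡ f₁ s²`; multiplying by `X - 1` and
using that `Xⁿ - 1 = (X^{n/2} - 1)²` is a square, `1` is a root of `f₁` of odd multiplicity.
A self-reciprocal polynomial in characteristic `2` without the root `1` has even degree, hence
`r = deg f₁` is odd and the reversal of `v·f₁` is the generator `σⁿ⁻¹⁻ʳ(v·f₁)`. Reversal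
conjugates `σ` to `σ⁻¹ = σⁿ⁻¹`, so `C` is closed under reversal, and adding `(v, …, v) ∈ C`
gives closure under reverse-complement.
-/

open Finset
open scoped Fin.NatCast Fin.CommRing

namespace Polynomial

lemma reflect_eq_X_pow_mul_reverse {R : Type*} [Semiring R] {N : ℕ} {p : R[X]}
    (h : p.natDegree ≤ N) : reflect N p = X ^ (N - p.natDegree) * p.reverse := by
  have h1 : reflect N (1 * p) = reflect (N - p.natDegree) 1 * reflect p.natDegree p := by
    rw [← reflect_mul 1 p (natDegree_one.trans_le (Nat.zero_le _)) le_rfl, Nat.sub_add_cancel h]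
  rw [one_mul] at h1
  rw [h1, reflect_one]
  rfl

lemma X_pow_sub_one_dvd_ofFn_rotate {R : Type*} [CommRing R] [DecidableEq R] {n : ℕ} [NeZero n]
    (c : Fin n → R) : X ^ n - 1 ∣ ofFn n (fun j => c (j - 1)) - X * ofFn n c := by
  obtain ⟨m, rfl⟩ := Nat.exists_eq_succ_of_ne_zero (NeZero.ne n)
  have hsucc (i : Fin m) : i.succ - 1 = i.castSucc := sub_eq_of_eq_add Fin.coeSucc_eq_succ.symm
  have hzero : (0 : Fin (m + 1)) - 1 = Fin.last m := sub_eq_of_eq_add (Fin.last_add_one m).symm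
  refine ⟨-C (c (Fin.last m)), ?_⟩
  rw [ofFn_eq_sum_monomial, ofFn_eq_sum_monomial, Fin.sum_univ_succ, Fin.sum_univ_castSucc,
    mul_add, Finset.mul_sum]
  simp only [hsucc, hzero, Fin.val_succ, Fin.val_castSucc, Fin.val_last, Fin.val_zero,
    ← C_mul_X_pow_eq_monomial, Nat.succ_eq_add_one, mul_left_comm X, ← pow_succ']
  ring

lemma X_pow_sub_one_dvd_ofFn_rotate_iterate {R : Type*} [CommRing R] [DecidableEq R] {n : ℕ}
    [NeZero n] (c : Fin n → R) (k : ℕ) :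
    X ^ n - 1 ∣ ofFn n (fun j : Fin n => c (j - k)) - X ^ k * ofFn n c := by
  induction k with
  | zero => simp
  | succ k ih =>
    have hrot := X_pow_sub_one_dvd_ofFn_rotate (fun j : Fin n => c (j - k))
    have hshift : (fun j : Fin n => c (j - ((k + 1 : ℕ) : Fin n))) = fun j => c (j - 1 - k) := by
      ext j
      push_cast
      ring_nf
    rw [hshift]
    convert hrot.add (ih.mul_left X) using 1
    ring

lemma ofFn_one_eq_geom_sum {R : Type*} [Semiring R] [DecidableEq R] (n : ℕ) :
    ofFn n (fun _ => (1 : R)) = ∑ i ∈ range n, X ^ i := by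
  rw [ofFn_eq_sum_monomial, Fin.sum_univ_eq_sum_range (fun i => (monomial i (1 : R))) n]
  simp only [monomial_one_right_eq_X_pow]

lemma eval_one_eq_zero_of_reverse_eq_self {R : Type*} [Semiring R] [CharP R 2] {g : R[X]}
    (hg : g.reverse = g) (hodd : Odd g.natDegree) : g.eval 1 = 0 := by
  set r := g.natDegree
  have hsymm (i : ℕ) (hi : i ≤ r) : g.coeff (r - i) = g.coeff i := by
    conv_rhs => rw [← hg]
    rw [coeff_reverse, revAt_le hi]
  rw [eval_eq_sum_range]
  obtain ⟨t, ht⟩ := hodd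
  refine sum_involution (fun i _ => r - i) (fun i hi => ?_) (fun i hi _ => ?_)
    (fun i hi => ?_) (fun i hi => ?_)
  · rw [mem_range] at hi
    simp only [one_pow, mul_one, hsymm i (by omega), CharTwo.add_self_eq_zero]
  · rw [mem_range] at hi
    omega
  · rw [mem_range] at hi ⊢
    omega
  · rw [mem_range] at hi
    omega

lemma reverse_X_sub_C_one_pow {R : Type*} [CommRing R] [IsDomain R] [CharP R 2] (c : ℕ) :
    ((X - C 1 : R[X]) ^ c).reverse = (X - C 1) ^ c := by
  have h : (X - C 1 : R[X]).reverse = X - C 1 := by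
    have hX : (X : R[X]).reverse = 1 := by
      rw [← mul_one (X : R[X]), reverse_X_mul, ← C_1, reverse_C]
    rw [CharTwo.sub_eq_add, reverse_add_C, hX, natDegree_X, pow_one, map_one, one_mul, add_comm]
  induction c with
  | zero => simpa using reverse_C (1 : R)
  | succ c ih => rw [pow_succ, reverse_mul_of_domain, ih, h]

lemma odd_natDegree_of_reverse_eq_self {R : Type*} [CommRing R] [IsDomain R] [CharP R 2] {f : R[X]}
    (hf : f.reverse = f) (hodd : Odd (rootMultiplicity 1 f)) : Odd f.natDegree := by
  have hf0 : f ≠ 0 := by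
    rintro rfl
    simp at hodd
  obtain ⟨g, hfg, hg⟩ := exists_eq_pow_rootMultiplicity_mul_and_not_dvd f hf0 1
  set c := rootMultiplicity 1 f
  have hXc : (X - C 1 : R[X]) ^ c ≠ 0 := pow_ne_zero _ (X_sub_C_ne_zero 1)
  have hg0 : g ≠ 0 := by
    rintro rfl
    exact hf0 (by rw [hfg, mul_zero])
  have hgrev : g.reverse = g := by
    refine mul_left_cancel₀ hXc ?_
    conv_lhs => rw [← reverse_X_sub_C_one_pow]
    rw [← reverse_mul_of_domain, ← hfg, hf, hfg]
  have hg1 : g.eval 1 ≠ 0 := fun h => hg (dvd_iff_isRoot.2 h)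
  have hgeven : Even g.natDegree := by
    by_contra h
    exact hg1 (eval_one_eq_zero_of_reverse_eq_self hgrev (Nat.not_even_iff_odd.1 h))
  rw [hfg, natDegree_mul hXc hg0, natDegree_pow, natDegree_X_sub_C, mul_one]
  exact hodd.add_even hgeven

lemma odd_rootMultiplicity_one_of_dvd {R : Type*} [CommRing R] [IsDomain R] [CharP R 2]
    {n : ℕ} (hn : Even n) (hn0 : n ≠ 0) {f s : R[X]}
    (h : X ^ n - 1 ∣ ∑ i ∈ range n, X ^ i - f * s ^ 2) : Odd (rootMultiplicity 1 f) := by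
  obtain ⟨m, rfl⟩ := hn
  obtain ⟨W, hW⟩ := h
  set q : R[X] := 1 - (X - 1) * W
  have htwo : (2 : R[X]) = 0 := CharP.cast_eq_zero _ 2
  have key : (X - 1) * (f * (s * s)) = (X ^ m - 1) * (X ^ m - 1) * q := by
    linear_combination (-(X - 1 : R[X])) * hW + geom_sum_mul (X : R[X]) (m + m)
      + q * (X ^ m - 1) * htwo
  have hq : ¬ q.IsRoot 1 := by simp [q]
  have hXm : (X ^ m - 1 : R[X]) ≠ 0 := by simpa using X_pow_sub_C_ne_zero (by omega) (1 : R)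
  have hR : (X ^ m - 1) * (X ^ m - 1) * q ≠ 0 :=
    mul_ne_zero (mul_ne_zero hXm hXm) fun h => hq (by rw [h]; simp)
  have hL : (X - 1) * (f * (s * s)) ≠ 0 := by rwa [key]
  have hX1 : rootMultiplicity 1 (X - 1 : R[X]) = 1 := by
    simpa using rootMultiplicity_X_sub_C_self (x := (1 : R))
  have hmult := congrArg (rootMultiplicity 1) key
  rw [rootMultiplicity_mul hL, rootMultiplicity_mul (right_ne_zero_of_mul hL),
    rootMultiplicity_mul (right_ne_zero_of_mul (right_ne_zero_of_mul hL)), hX1,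
    rootMultiplicity_mul hR, rootMultiplicity_mul (left_ne_zero_of_mul hR),
    rootMultiplicity_eq_zero hq] at hmult
  exact ⟨rootMultiplicity 1 (X ^ m - 1 : R[X]) - rootMultiplicity 1 s - 1, by omega⟩

end Polynomial

lemma theta_involutive : Function.Involutive theta := fun _ => rfl

lemma sshift_add {n : ℕ} (c d : Fin n → Rt) : sshift (c + d) = sshift c + sshift d := rfl

lemma sshift_smul {n : ℕ} (a : Rt) (c : Fin n → Rt) : sshift (a • c) = theta a • sshift c := rfl

section SkewShift

variable {n : ℕ} [NeZero n]

lemma sshift_apply (c : Fin n → Rt) (j : Fin n) : sshift c j = theta (c (j - 1)) := by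
  simp only [sshift]
  congr 2
  ext
  rw [Fin.sub_def, Fin.val_one']
  obtain _ | _ | n := n
  · exact absurd rfl (NeZero.ne 0)
  · simp
  · simp [Nat.mod_eq_of_lt, Nat.add_comm]

lemma iterate_sshift_apply (k : ℕ) (c : Fin n → Rt) (j : Fin n) :
    sshift^[k] c j = theta^[k] (c (j - k)) := by
  induction k generalizing j with
  | zero => simp
  | succ k ih =>
    rw [Function.iterate_succ_apply', sshift_apply, ih, Function.iterate_succ_apply' theta]
    push_cast
    ring_nf

lemma iterate_sshift_of_even (hn : Even n) (c : Fin n → Rt) : sshift^[n] c = c := by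
  ext1 j
  simp [iterate_sshift_apply, theta_involutive.iterate_even hn]

lemma sshift_mem_skewSpan (hn : Even n) {f c : Fin n → Rt} (hc : c ∈ skewSpan f) :
    sshift c ∈ skewSpan f := by
  induction hc using Submodule.span_induction with
  | mem c hc =>
    obtain ⟨k, rfl⟩ := hc
    rw [← Function.iterate_succ_apply' sshift]
    rcases (Nat.succ_le_of_lt k.isLt).lt_or_eq with hk | hk
    · exact Submodule.subset_span ⟨⟨k + 1, hk⟩, rfl⟩
    · rw [hk, iterate_sshift_of_even hn]
      exact Submodule.subset_span ⟨0, rfl⟩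
  | zero => exact Submodule.zero_mem _
  | add c d _ _ hc hd => rw [sshift_add]; exact Submodule.add_mem _ hc hd
  | smul a c _ hc => rw [sshift_smul]; exact Submodule.smul_mem _ _ hc

lemma iterate_sshift_mem_skewSpan (hn : Even n) {f c : Fin n → Rt} (hc : c ∈ skewSpan f)
    (k : ℕ) : sshift^[k] c ∈ skewSpan f := by
  induction k with
  | zero => exact hc
  | succ k ih => rw [Function.iterate_succ_apply']; exact sshift_mem_skewSpan hn ih

lemma sshift_comp_rev (hn : Even n) (c : Fin n → Rt) :
    sshift c ∘ Fin.rev = sshift^[n - 1] (c ∘ Fin.rev) := by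
  ext1 j
  have hodd : Odd (n - 1) := by
    obtain ⟨m, hm⟩ := hn
    exact ⟨m - 1, by have := NeZero.ne n; omega⟩
  rw [Function.comp_apply, iterate_sshift_apply, theta_involutive.iterate_odd hodd, sshift_apply,
    Function.comp_apply, Nat.cast_pred (Nat.pos_of_ne_zero (NeZero.ne n)), Fin.rev_sub]
  simp [sub_eq_add_neg]

lemma comp_rev_mem_skewSpan (hn : Even n) {f c : Fin n → Rt} (hf : f ∘ Fin.rev ∈ skewSpan f)
    (hc : c ∈ skewSpan f) : c ∘ Fin.rev ∈ skewSpan f := by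
  induction hc using Submodule.span_induction with
  | mem c hc =>
    obtain ⟨k, rfl⟩ := hc
    suffices ∀ k : ℕ, sshift^[k] f ∘ Fin.rev ∈ skewSpan f from this k
    intro k
    induction k with
    | zero => exact hf
    | succ k ih =>
      rw [Function.iterate_succ_apply', sshift_comp_rev hn]
      exact iterate_sshift_mem_skewSpan hn ih _
  | zero => exact Submodule.zero_mem _
  | add c d _ _ hc hd => exact Submodule.add_mem _ hc hd
  | smul a c _ hc => exact Submodule.smul_mem _ a hc

end SkewShift

lemma vPoly_apply (n : ℕ) (p : (ZMod 2)[X]) (j : Fin n) : vPoly n p j = (p.coeff j, 0) := by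
  simp [vPoly, vv]

lemma vPoly_comp_rev (n : ℕ) (p : (ZMod 2)[X]) :
    vPoly n p ∘ Fin.rev = vPoly n (reflect (n - 1) p) := by
  ext1 j
  rw [Function.comp_apply, vPoly_apply, vPoly_apply, coeff_reflect, revAt_le (by omega),
    Fin.val_rev]
  congr 2
  omega

lemma iterate_sshift_vPoly {n k : ℕ} [NeZero n] (hk : Even k) {p : (ZMod 2)[X]}
    (hp : p.natDegree + k < n) : sshift^[k] (vPoly n p) = vPoly n (X ^ k * p) := by
  ext1 j
  have hkn : ((k : Fin n) : ℕ) = k := Fin.val_cast_of_lt (by omega)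
  rw [iterate_sshift_apply, theta_involutive.iterate_even hk, vPoly_apply, vPoly_apply,
    coeff_X_pow_mul']
  split_ifs with hjk
  · rw [Fin.coe_sub_iff_le.2 (by rw [Fin.le_def, hkn]; exact hjk), hkn, id]
  · rw [id, Fin.coe_sub_iff_lt.2 (by rw [Fin.lt_def, hkn]; omega), hkn,
      coeff_eq_zero_of_natDegree_lt (by omega)]

lemma exists_dvd_ofFn_fst_sub_mul_sq {n : ℕ} [NeZero n] {p : (ZMod 2)[X]}
    (hp : p.natDegree < n) {c : Fin n → Rt} (hc : c ∈ skewSpan (vPoly n p)) :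
    ∃ s : (ZMod 2)[X], X ^ n - 1 ∣ ofFn n (fun j => (c j).1) - p * s ^ 2 := by
  induction hc using Submodule.span_induction with
  | mem c hc =>
    obtain ⟨k, rfl⟩ := hc
    rcases Nat.even_or_odd k with ⟨t, ht⟩ | hk
    · refine ⟨X ^ t, ?_⟩
      have hfst (j : Fin n) : (sshift^[k] (vPoly n p) j).1 = toFn n p (j - k) := by
        rw [iterate_sshift_apply, theta_involutive.iterate_even ⟨t, ht⟩, vPoly_apply,
          Fin.cast_val_eq_self]
        rfl
      have hsq : p * (X ^ t) ^ 2 = X ^ (k : ℕ) * ofFn n (toFn n p) := by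
        rw [ofFn_comp_toFn_eq_id_of_natDegree_lt hp, ht]
        ring
      simpa only [hfst, hsq, Fin.cast_val_eq_self] using
        X_pow_sub_one_dvd_ofFn_rotate_iterate (toFn n p) k
    · refine ⟨0, ?_⟩
      have hfst (j : Fin n) : (sshift^[k] (vPoly n p) j).1 = 0 := by
        rw [iterate_sshift_apply, theta_involutive.iterate_odd hk, vPoly_apply]
        rfl
      simp [hfst, ← Pi.zero_def]
  | zero => exact ⟨0, by simp [← Pi.zero_def]⟩
  | add c d _ _ hc hd =>
    obtain ⟨s, hs⟩ := hc
    obtain ⟨t, ht⟩ := hd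
    refine ⟨s + t, ?_⟩
    have hfst : ofFn n (fun j => ((c + d) j).1)
        = ofFn n (fun j => (c j).1) + ofFn n (fun j => (d j).1) := map_add _ _ _
    rw [hfst, add_pow_char]
    convert hs.add ht using 1
    ring
  | smul a c _ hc =>
    obtain ⟨s, hs⟩ := hc
    refine ⟨C a.1 * s, ?_⟩
    have hfst : ofFn n (fun j => ((a • c) j).1) = C a.1 * ofFn n (fun j => (c j).1) := by
      rw [← smul_eq_C_mul, ← map_smul]
      rfl
    have hidem : (C a.1) ^ 2 = C a.1 := by rw [← C_pow, ZMod.pow_card]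
    rw [hfst, mul_pow, hidem]
    convert hs.mul_left (C a.1) using 1
    ring

theorem skew_reverseComplement_of_selfReciprocal_v_general (n : ℕ) (hn : Even n)
    (f₁ : (ZMod 2)[X]) (hdeg : f₁.natDegree < n)
    (hv : (fun _ : Fin n => vv) ∈ skewSpan (vPoly n f₁))
    (hself : f₁.reverse = f₁) :
    ∀ c ∈ skewSpan (vPoly n f₁), rcomp c ∈ skewSpan (vPoly n f₁) := by
  have : NeZero n := ⟨by omega⟩
  obtain ⟨s, hs⟩ := exists_dvd_ofFn_fst_sub_mul_sq hdeg hv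
  rw [show (fun j : Fin n => ((fun _ : Fin n => vv) j).1) = fun _ => 1 from rfl,
    ofFn_one_eq_geom_sum] at hs
  have hodd : Odd f₁.natDegree :=
    odd_natDegree_of_reverse_eq_self hself (odd_rootMultiplicity_one_of_dvd hn (by omega) hs)
  have hrev : vPoly n f₁ ∘ Fin.rev ∈ skewSpan (vPoly n f₁) := by
    have heven : Even (n - 1 - f₁.natDegree) := by
      obtain ⟨m, hm⟩ := hn
      obtain ⟨t, ht⟩ := hodd
      exact ⟨m - t - 1, by omega⟩
    rw [vPoly_comp_rev, reflect_eq_X_pow_mul_reverse (by omega), hself,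
      ← iterate_sshift_vPoly heven (by omega)]
    exact Submodule.subset_span ⟨⟨n - 1 - f₁.natDegree, by omega⟩, rfl⟩
  intro c hc
  have hrcomp : rcomp c = c ∘ Fin.rev + fun _ => vv := rfl
  rw [hrcomp]
  exact Submodule.add_mem _ (comp_rev_mem_skewSpan hn hrev hc) hv

/-- let `n` be even, `f₁ ∈ F₂[x]` monic of degree `r < n` dividing `xⁿ - 1`,
and let `C` be the skew cyclic code generated by `v·f₁`.  If the constant vector
`(v, …, v)` belongs to `C` and `f₁` is self-reciprocal, then `C` is reverse-complement. -/
theorem skew_reverseComplement_of_selfReciprocal_v (n : ℕ) (hn : Even n)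
    (f₁ : (ZMod 2)[X]) (hmonic : f₁.Monic) (hdeg : f₁.natDegree < n)
    (hdvd : f₁ ∣ X ^ n - 1)
    (hv : (fun _ : Fin n => vv) ∈ skewSpan (vPoly n f₁))
    (hself : f₁.reverse = f₁) :
    ∀ c ∈ skewSpan (vPoly n f₁), rcomp c ∈ skewSpan (vPoly n f₁) :=
  skew_reverseComplement_of_selfReciprocal_v_general n hn f₁ hdeg hv hself
end
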